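/- arXiv:2411.12546 — 4 statements merged into one kernel-verified Lean document; each statement's English description precedes it below -/
import Mathlib

section
/- Let m and n be positive integers with m ≤ n, and let a, b, a', b' be integers with a ≥ b. Assume that m·a + n·b = m·a' + n·b' and that for every integer t one has ∏_{i=1}^{m}(t − a + i) · ∏_{j=1}^{n}(t − b + j) = ∏_{i=1}^{m}(t − a' + i) · ∏_{j=1}^{n}(t − b' + j). Then (a', b') = (a, b) or (a', b') = (b + m − n, a). -/
/-- If two hypersurfaces of `ℙ^m × ℙ^n` of bidegrees `(a,b)` and `(a',b')` have the
same Hilbert polynomial (expressed by the linear relation `m·a + n·b = m·a' + n·b'`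
together with the product identity holding for all integers `t`), and `a ≥ b`, then
`(a',b') = (a,b)` or `(a',b') = (b + m − n, a)`. -/
theorem stmt0 (m n : ℕ) (hm : 0 < m) (hmn : m ≤ n) (a b a' b' : ℤ) (hab : b ≤ a)
    (hlin : (m : ℤ) * a + (n : ℤ) * b = (m : ℤ) * a' + (n : ℤ) * b')
    (hprod : ∀ t : ℤ,
      (∏ i ∈ Finset.range m, (t - a + (i + 1))) *
        (∏ j ∈ Finset.range n, (t - b + (j + 1))) =
      (∏ i ∈ Finset.range m, (t - a' + (i + 1))) *
        (∏ j ∈ Finset.range n, (t - b' + (j + 1)))) :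
    (a' = a ∧ b' = b) ∨ (a' = b + (m : ℤ) - (n : ℤ) ∧ b' = a) := by
  have hn : 0 < n := lt_of_lt_of_le hm hmn
  -- Step 1: nonvanishing at t = a
  have h1 := hprod a
  have hL1 : (∏ i ∈ Finset.range m, (a - a + ((i : ℤ) + 1))) *
      (∏ j ∈ Finset.range n, (a - b + ((j : ℤ) + 1))) ≠ 0 := by
    apply mul_ne_zero
    · rw [Finset.prod_ne_zero_iff]
      intro i _
      omega
    · rw [Finset.prod_ne_zero_iff]
      intro j _
      omega
  rw [h1] at hL1
  obtain ⟨hA1, hB1⟩ := mul_ne_zero_iff.mp hL1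
  rw [Finset.prod_ne_zero_iff] at hA1 hB1
  -- Step 2: vanishing at t = a - 1
  have h2 := (hprod (a - 1)).symm
  have hL2 : (∏ i ∈ Finset.range m, (a - 1 - a + ((i : ℤ) + 1))) = 0 :=
    Finset.prod_eq_zero (Finset.mem_range.mpr hm) (by push_cast; ring)
  rw [hL2, zero_mul] at h2
  rcases mul_eq_zero.mp h2 with hA2 | hB2
  · -- a' = a, hence b' = b
    rw [Finset.prod_eq_zero_iff] at hA2
    obtain ⟨i, hi, hiz⟩ := hA2
    rw [Finset.mem_range] at hi
    have ha' : a' = a := by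
      rcases Nat.eq_zero_or_pos i with h0 | h0
      · subst h0; omega
      · exfalso
        have h := hA1 (i - 1) (Finset.mem_range.mpr (by omega))
        omega
    left
    refine ⟨ha', ?_⟩
    subst ha'
    have hnb : (n : ℤ) * b' = (n : ℤ) * b := by linarith
    have hn0 : (n : ℤ) ≠ 0 := by exact_mod_cast hn.ne'
    exact mul_left_cancel₀ hn0 hnb
  · -- b' = a
    rw [Finset.prod_eq_zero_iff] at hB2
    obtain ⟨j, hj, hjz⟩ := hB2
    rw [Finset.mem_range] at hj
    have hb' : b' = a := by
      rcases Nat.eq_zero_or_pos j with h0 | h0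
      · subst h0; omega
      · exfalso
        have h := hB1 (j - 1) (Finset.mem_range.mpr (by omega))
        omega
    by_cases hba : b = a
    · -- then a' = a as well
      left
      have hma : (m : ℤ) * a' = (m : ℤ) * a := by rw [hb', hba] at hlin; linarith
      have hm0 : (m : ℤ) ≠ 0 := by exact_mod_cast hm.ne'
      exact ⟨mul_left_cancel₀ hm0 hma, by rw [hb', hba]⟩
    · have hblt : b < a := lt_of_le_of_ne hab hba
      -- Step 3: vanishing at t = b - n
      have h3 := hprod (b - n)
      have hL3 : (∏ j ∈ Finset.range n, (b - (n : ℤ) - b + ((j : ℤ) + 1))) = 0 :=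
        Finset.prod_eq_zero (Finset.mem_range.mpr (by omega : n - 1 < n)) (by
          have : ((n - 1 : ℕ) : ℤ) = (n : ℤ) - 1 := by omega
          rw [this]; ring)
      rw [hL3, mul_zero] at h3
      rcases mul_eq_zero.mp h3.symm with hA3 | hB3
      swap
      · exfalso
        rw [Finset.prod_eq_zero_iff] at hB3
        obtain ⟨k, hk, hkz⟩ := hB3
        rw [Finset.mem_range] at hk
        omega
      rw [Finset.prod_eq_zero_iff] at hA3
      obtain ⟨i, hi, hiz⟩ := hA3
      rw [Finset.mem_range] at hi
      -- Step 4: nonvanishing at t = b - n - 1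
      have h4 := hprod (b - n - 1)
      have hL4 : (∏ i ∈ Finset.range m, (b - (n : ℤ) - 1 - a + ((i : ℤ) + 1))) *
          (∏ j ∈ Finset.range n, (b - (n : ℤ) - 1 - b + ((j : ℤ) + 1))) ≠ 0 := by
        apply mul_ne_zero
        · rw [Finset.prod_ne_zero_iff]
          intro k hk
          rw [Finset.mem_range] at hk
          omega
        · rw [Finset.prod_ne_zero_iff]
          intro k hk
          rw [Finset.mem_range] at hk
          omega
      rw [h4] at hL4
      obtain ⟨hA4, _⟩ := mul_ne_zero_iff.mp hL4
      rw [Finset.prod_ne_zero_iff] at hA4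
      right
      refine ⟨?_, hb'⟩
      by_cases him : i + 1 = m
      · omega
      · exfalso
        have h := hA4 (i + 1) (Finset.mem_range.mpr (by omega))
        omega
end

section
/- Let m and n be positive integers with m ≤ n, and let a, b, a', b' be integers with a ≥ b and a' ≥ b'. Assume that m·a + n·b = m·a' + n·b' and that for every integer t one has ∏_{i=1}^{m}(t − a + i) · ∏_{j=1}^{n}(t − b + j) = ∏_{i=1}^{m}(t − a' + i) · ∏_{j=1}^{n}(t − b' + j). Then a' = a and b' = b. -/
/-- Auxiliary: comparing largest roots. -/
lemma aux_root (m n : ℕ) (hm : 0 < m) (hmn : 0 < n) (a b a' b' : ℤ) (hab' : b' ≤ a')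
    (h : (∏ i ∈ Finset.range m, ((a - 1) - a + (i + 1))) *
        (∏ j ∈ Finset.range n, ((a - 1) - b + (j + 1))) =
      (∏ i ∈ Finset.range m, ((a - 1) - a' + (i + 1))) *
        (∏ j ∈ Finset.range n, ((a - 1) - b' + (j + 1)))) : a ≤ a' := by
  have hL : (∏ i ∈ Finset.range m, ((a - 1) - a + ((i : ℤ) + 1))) = 0 := by
    apply Finset.prod_eq_zero (Finset.mem_range.mpr hm)
    push_cast
    ring
  rw [hL, zero_mul] at h
  rcases mul_eq_zero.mp h.symm with h0 | h0
  · obtain ⟨i, hi, hzi⟩ := Finset.prod_eq_zero_iff.mp h0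
    have : a' = a + i := by linarith
    have : (0 : ℤ) ≤ i := Int.natCast_nonneg i
    linarith
  · obtain ⟨j, hj, hzj⟩ := Finset.prod_eq_zero_iff.mp h0
    have : b' = a + j := by linarith
    have : (0 : ℤ) ≤ j := Int.natCast_nonneg j
    linarith

/-- First case in the proof of the proposition on hypersurfaces of `ℙ^m × ℙ^n` with
equal Hilbert polynomials: if moreover `a' ≥ b'`, then `a' = a` and `b' = b`. -/
theorem stmt1 (m n : ℕ) (hm : 0 < m) (hmn : m ≤ n) (a b a' b' : ℤ)
    (hab : b ≤ a) (hab' : b' ≤ a')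
    (hlin : (m : ℤ) * a + (n : ℤ) * b = (m : ℤ) * a' + (n : ℤ) * b')
    (hprod : ∀ t : ℤ,
      (∏ i ∈ Finset.range m, (t - a + (i + 1))) *
        (∏ j ∈ Finset.range n, (t - b + (j + 1))) =
      (∏ i ∈ Finset.range m, (t - a' + (i + 1))) *
        (∏ j ∈ Finset.range n, (t - b' + (j + 1)))) :
    a' = a ∧ b' = b := by
  have hn : 0 < n := lt_of_lt_of_le hm hmn
  have h1 : a ≤ a' := aux_root m n hm hn a b a' b' hab' (hprod (a - 1))
  have h2 : a' ≤ a := aux_root m n hm hn a' b' a b hab (hprod (a' - 1)).symm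
  have ha : a' = a := le_antisymm h2 h1
  refine ⟨ha, ?_⟩
  have hnz : (n : ℤ) ≠ 0 := by exact_mod_cast hn.ne'
  have : (n : ℤ) * b' = (n : ℤ) * b := by rw [ha] at hlin; linarith
  exact mul_left_cancel₀ hnz this
end

section
/- Let m and n be positive integers with m ≤ n, and let a, b, a', b' be integers with a ≥ b. Assume that m·a + n·b = m·a' + n·b' and that for every integer t one has ∏_{i=1}^{m}(t − a + i) · ∏_{j=1}^{n}(t − b + j) = ∏_{i=1}^{m}(t − a' + i) · ∏_{j=1}^{n}(t − b' + j). If moreover either a = b, or (m < n and 0 < a − b and a − b ≠ m), then necessarily (a', b') = (a, b). -/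
lemma Ppos (k : ℕ) (c t : ℤ) (h : c ≤ t) :
    0 < ∏ i ∈ Finset.range k, (t - c + (i + 1)) := by
  apply Finset.prod_pos
  intro i _
  have : (0:ℤ) ≤ (i : ℤ) := Int.natCast_nonneg i
  linarith

lemma Pne_of_lt (k : ℕ) (c t : ℤ) (h : t + k < c) :
    ∏ i ∈ Finset.range k, (t - c + (i + 1)) ≠ 0 := by
  rw [Finset.prod_ne_zero_iff]
  intro i hi
  have hik : (i : ℤ) + 1 ≤ (k : ℤ) := by
    exact_mod_cast Nat.succ_le_of_lt (Finset.mem_range.mp hi)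
  intro hzero
  linarith

lemma Pzero (k : ℕ) (c t : ℤ) (h1 : c - k ≤ t) (h2 : t < c) :
    ∏ i ∈ Finset.range k, (t - c + (i + 1)) = 0 := by
  apply Finset.prod_eq_zero (i := (c - t - 1).toNat)
  · rw [Finset.mem_range]
    have h0 : (0:ℤ) ≤ c - t - 1 := by linarith
    have : ((c - t - 1).toNat : ℤ) = c - t - 1 := Int.toNat_of_nonneg h0
    omega
  · have h0 : (0:ℤ) ≤ c - t - 1 := by linarith
    have : ((c - t - 1).toNat : ℤ) = c - t - 1 := Int.toNat_of_nonneg h0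
    rw [this]; ring

/-- From vanishing of the product, get the root location bounds. -/
lemma Pzero_bounds (k : ℕ) (c t : ℤ)
    (h : ∏ i ∈ Finset.range k, (t - c + (i + 1)) = 0) :
    t < c ∧ c ≤ t + k := by
  constructor
  · by_contra hc
    exact absurd h (ne_of_gt (Ppos k c t (by linarith)))
  · by_contra hc
    exact Pne_of_lt k c t (by linarith) h

/-- Uniqueness assertion (`#S = 1`) in the proposition on hypersurfaces of
`ℙ^m × ℙ^n` with equal Hilbert polynomials: if `a = b`, or `m < n` and
`0 < a − b ≠ m`, then necessarily `(a', b') = (a, b)`. -/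
theorem stmt2 (m n : ℕ) (hm : 0 < m) (hmn : m ≤ n) (a b a' b' : ℤ) (hab : b ≤ a)
    (hlin : (m : ℤ) * a + (n : ℤ) * b = (m : ℤ) * a' + (n : ℤ) * b')
    (hprod : ∀ t : ℤ,
      (∏ i ∈ Finset.range m, (t - a + (i + 1))) *
        (∏ j ∈ Finset.range n, (t - b + (j + 1))) =
      (∏ i ∈ Finset.range m, (t - a' + (i + 1))) *
        (∏ j ∈ Finset.range n, (t - b' + (j + 1))))
    (hextra : a = b ∨ (m < n ∧ 0 < a - b ∧ a - b ≠ (m : ℤ))) :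
    a' = a ∧ b' = b := by
  have hn : 0 < n := lt_of_lt_of_le hm hmn
  have hmz : (0:ℤ) < m := by exact_mod_cast hm
  have hnz : (0:ℤ) < n := by exact_mod_cast hn
  have hmnz : (m:ℤ) ≤ n := by exact_mod_cast hmn
  -- Step 1: a' ≤ a
  have ha' : a' ≤ a := by
    by_contra hc
    push_neg at hc
    have hL := hprod (a' - 1)
    rw [Pzero m a' (a' - 1) (by linarith) (by linarith), zero_mul] at hL
    exact absurd hL (ne_of_gt (mul_pos (Ppos m a _ (by linarith)) (Ppos n b _ (by linarith))))
  -- Step 2: b' ≤ a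
  have hb' : b' ≤ a := by
    by_contra hc
    push_neg at hc
    have hL := hprod (b' - 1)
    rw [Pzero n b' (b' - 1) (by linarith) (by linarith), mul_zero] at hL
    exact absurd hL (ne_of_gt (mul_pos (Ppos m a _ (by linarith)) (Ppos n b _ (by linarith))))
  -- Step 3: L(a-1) = 0, hence a' = a or b' = a
  have hkey : a' = a ∨ b' = a := by
    have hL := hprod (a - 1)
    rw [Pzero m a (a - 1) (by linarith) (by linarith), zero_mul] at hL
    rcases mul_eq_zero.mp hL.symm with h | h
    · left
      have := Pzero_bounds m a' (a - 1) h
      linarith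
    · right
      have := Pzero_bounds n b' (a - 1) h
      linarith
  rcases hkey with h | h
  · subst h
    constructor
    · rfl
    · have : (n:ℤ) * b = n * b' := by linarith
      exact (mul_left_cancel₀ (ne_of_gt hnz) this.symm)
  · -- b' = a
    rcases hextra with heq | ⟨hmn', hab', habm⟩
    · have : (m:ℤ) * a' = m * a := by rw [h, ← heq] at hlin; linarith
      have ha'a : a' = a := mul_left_cancel₀ (ne_of_gt hmz) this
      exact ⟨ha'a, by rw [h, heq]⟩
    · exfalso
      -- Step 4: b - n ≤ a' - m
      have h4 : b - n ≤ a' - m := by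
        by_contra hc
        push_neg at hc
        have hL := hprod (a' - m)
        rw [Pzero m a' (a' - m) (by linarith) (by linarith)] at hL
        rw [zero_mul] at hL
        have h1 : ∏ i ∈ Finset.range m, ((a' - m : ℤ) - a + (i + 1)) ≠ 0 :=
          Pne_of_lt m a _ (by linarith)
        have h2 : ∏ j ∈ Finset.range n, ((a' - m : ℤ) - b + (j + 1)) ≠ 0 :=
          Pne_of_lt n b _ (by linarith)
        exact mul_ne_zero h1 h2 hL
      -- Step 5: L(b - n) = 0 forces a' = b - n + m
      have h5 : a' = b - n + m := by
        have hL := hprod (b - n)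
        rw [Pzero n b (b - n) (by linarith) (by linarith), mul_zero] at hL
        rcases mul_eq_zero.mp hL.symm with h | h
        · have := Pzero_bounds m a' (b - n) h
          linarith
        · exact absurd h (Pne_of_lt n b' (b - n) (by linarith))
      -- contradiction: (n - m)(a - b) = m(n - m) with n > m gives a - b = m
      have hmn'' : (m:ℤ) < n := by exact_mod_cast hmn'
      apply habm
      have key : ((n:ℤ) - m) * (a - b) = ((n:ℤ) - m) * m := by
        rw [h5, h] at hlin; nlinarith [hlin]
      exact mul_left_cancel₀ (by linarith) key
end

section
/- Let m and n be positive integers and let a, b be natural numbers, not both zero. Define the polynomial p_{a,b} ∈ ℚ[t] by p_{a,b}(t) = B_m(t)·B_n'(t) − B_m(t − a)·B_n'(t − b), where B_m(t) = (1/m!)·∏_{i=1}^{m}(t + i) and B_n'(t) = (1/n!)·∏_{j=1}^{n}(t + j). Then p_{a,b} has degree exactly m + n − 1 and its leading coefficient equals (m·a + n·b)/(m!·n!). -/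
open Polynomial

/-- `B_m(t) = (1/m!)·∏_{i=1}^{m}(t + i)`, the binomial coefficient `C(t+m, m)`
viewed as a polynomial in `t` over `ℚ`. -/
noncomputable def binomPoly (m : ℕ) : Polynomial ℚ :=
  Polynomial.C (1 / (m.factorial : ℚ)) *
    ∏ i ∈ Finset.range m, (Polynomial.X + Polynomial.C ((i : ℚ) + 1))

private noncomputable def linProd (m : ℕ) (a : ℚ) : Polynomial ℚ :=
  ∏ i ∈ Finset.range m, (Polynomial.X + Polynomial.C ((i : ℚ) + 1 - a))

private lemma linProd_monic (m : ℕ) (a : ℚ) : (linProd m a).Monic :=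
  monic_prod_of_monic _ _ fun _ _ => monic_X_add_C _

private lemma linProd_natDegree (m : ℕ) (a : ℚ) : (linProd m a).natDegree = m := by
  rw [linProd, natDegree_prod_of_monic _ _ fun _ _ => monic_X_add_C _]
  simp only [natDegree_X_add_C, Finset.sum_const, Finset.card_range, smul_eq_mul, mul_one]

private lemma linProd_nextCoeff (m : ℕ) (a : ℚ) :
    (linProd m a).nextCoeff = (∑ i ∈ Finset.range m, ((i : ℚ) + 1)) - m * a := by
  rw [linProd, Monic.nextCoeff_prod _ _ fun _ _ => monic_X_add_C _]
  simp only [nextCoeff_X_add_C, Finset.sum_sub_distrib, Finset.sum_const, Finset.card_range,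
    nsmul_eq_mul]

private lemma binomPoly_comp (m : ℕ) (a : ℚ) :
    (binomPoly m).comp (Polynomial.X - Polynomial.C a) =
      Polynomial.C (1 / (m.factorial : ℚ)) * linProd m a := by
  rw [binomPoly, linProd, mul_comp, C_comp, prod_comp]
  congr 1
  refine Finset.prod_congr rfl fun i _ => ?_
  rw [add_comp, X_comp, C_comp, map_sub]
  ring

private lemma key (d : ℕ) (hd : 0 < d) (p q : Polynomial ℚ) (hp : p.Monic) (hq : q.Monic)
    (hpd : p.natDegree = d) (hqd : q.natDegree = d)
    (hne : p.nextCoeff ≠ q.nextCoeff) :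
    (p - q).degree = (d - 1 : ℕ) ∧ (p - q).leadingCoeff = p.nextCoeff - q.nextCoeff := by
  have hco : (p - q).coeff (d - 1) = p.nextCoeff - q.nextCoeff := by
    rw [coeff_sub, nextCoeff_of_natDegree_pos (hpd ▸ hd), nextCoeff_of_natDegree_pos (hqd ▸ hd),
      hpd, hqd]
  have hlt : (p - q).degree < (d : ℕ) := by
    have hdq : p.degree = q.degree := by
      rw [degree_eq_natDegree hp.ne_zero, degree_eq_natDegree hq.ne_zero, hpd, hqd]
    have := Polynomial.degree_sub_lt hdq hp.ne_zero (hp.leadingCoeff.trans hq.leadingCoeff.symm)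
    rwa [degree_eq_natDegree hp.ne_zero, hpd] at this
  have hle : (p - q).degree ≤ (d - 1 : ℕ) := by
    refine (degree_le_iff_coeff_zero _ _).mpr fun k hk => ?_
    have hk' : d - 1 < k := by exact_mod_cast hk
    exact (degree_lt_iff_coeff_zero _ _).mp hlt k (by exact_mod_cast (by omega : d ≤ k))
  have hne' : (p - q).coeff (d - 1) ≠ 0 := hco ▸ sub_ne_zero_of_ne hne
  have hdeg : (p - q).degree = (d - 1 : ℕ) := degree_eq_of_le_of_coeff_ne_zero hle hne'
  refine ⟨hdeg, ?_⟩
  rw [leadingCoeff, natDegree_eq_of_degree_eq_some hdeg, hco]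

/-- The Hilbert polynomial `p_{a,b}(t) = B_m(t)·B_n(t) − B_m(t−a)·B_n(t−b)` of a
hypersurface of bidegree `(a,b)` in `ℙ^m × ℙ^n` has degree exactly `m + n − 1` and
leading coefficient `(m·a + n·b)/(m!·n!)`. -/
theorem stmt3 (m n : ℕ) (hm : 0 < m) (hn : 0 < n) (a b : ℕ) (hab : ¬(a = 0 ∧ b = 0)) :
    (binomPoly m * binomPoly n -
        (binomPoly m).comp (Polynomial.X - Polynomial.C (a : ℚ)) *
          (binomPoly n).comp (Polynomial.X - Polynomial.C (b : ℚ))).degree =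
      (m + n - 1 : ℕ) ∧
    (binomPoly m * binomPoly n -
        (binomPoly m).comp (Polynomial.X - Polynomial.C (a : ℚ)) *
          (binomPoly n).comp (Polynomial.X - Polynomial.C (b : ℚ))).leadingCoeff =
      ((m : ℚ) * a + (n : ℚ) * b) / ((m.factorial : ℚ) * (n.factorial : ℚ)) := by
  set c : ℚ := 1 / (m.factorial : ℚ) * (1 / (n.factorial : ℚ)) with hc
  have hc0 : c ≠ 0 := by
    have h1 : (m.factorial : ℚ) ≠ 0 := Nat.cast_ne_zero.mpr m.factorial_ne_zero
    have h2 : (n.factorial : ℚ) ≠ 0 := Nat.cast_ne_zero.mpr n.factorial_ne_zero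
    simp [hc, h1, h2]
  set p : Polynomial ℚ := linProd m 0 * linProd n 0 with hp
  set q : Polynomial ℚ := linProd m a * linProd n b with hq
  have hrw : binomPoly m * binomPoly n -
        (binomPoly m).comp (Polynomial.X - Polynomial.C (a : ℚ)) *
          (binomPoly n).comp (Polynomial.X - Polynomial.C (b : ℚ)) =
      Polynomial.C c * (p - q) := by
    have h0m : binomPoly m = Polynomial.C (1 / (m.factorial : ℚ)) * linProd m 0 := by
      rw [binomPoly, linProd]; simp
    have h0n : binomPoly n = Polynomial.C (1 / (n.factorial : ℚ)) * linProd n 0 := by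
      rw [binomPoly, linProd]; simp
    rw [binomPoly_comp, binomPoly_comp, h0m, h0n, hp, hq, hc, C_mul, mul_sub]
    ring
  have hpm : p.Monic := (linProd_monic m 0).mul (linProd_monic n 0)
  have hqm : q.Monic := (linProd_monic m a).mul (linProd_monic n b)
  have hpd : p.natDegree = m + n := by
    rw [hp, (linProd_monic m 0).natDegree_mul (linProd_monic n 0), linProd_natDegree,
      linProd_natDegree]
  have hqd : q.natDegree = m + n := by
    rw [hq, (linProd_monic m a).natDegree_mul (linProd_monic n b), linProd_natDegree,
      linProd_natDegree]
  have hnc : p.nextCoeff - q.nextCoeff = (m : ℚ) * a + (n : ℚ) * b := by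
    rw [hp, hq, (linProd_monic m 0).nextCoeff_mul (linProd_monic n 0),
      (linProd_monic m a).nextCoeff_mul (linProd_monic n b),
      linProd_nextCoeff, linProd_nextCoeff, linProd_nextCoeff, linProd_nextCoeff]
    ring
  have habQ : (m : ℚ) * a + (n : ℚ) * b ≠ 0 := by
    rcases not_and_or.mp hab with h | h
    · have : (0:ℚ) < (m : ℚ) * a + (n : ℚ) * b := by
        have ha : 0 < (a:ℚ) := by exact_mod_cast Nat.pos_of_ne_zero h
        have : 0 < (m:ℚ) * a := mul_pos (by exact_mod_cast hm) ha
        nlinarith [mul_nonneg (Nat.cast_nonneg (α := ℚ) n) (Nat.cast_nonneg (α := ℚ) b)]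
      linarith
    · have : (0:ℚ) < (m : ℚ) * a + (n : ℚ) * b := by
        have hb : 0 < (b:ℚ) := by exact_mod_cast Nat.pos_of_ne_zero h
        have : 0 < (n:ℚ) * b := mul_pos (by exact_mod_cast hn) hb
        nlinarith [mul_nonneg (Nat.cast_nonneg (α := ℚ) m) (Nat.cast_nonneg (α := ℚ) a)]
      linarith
  have hne : p.nextCoeff ≠ q.nextCoeff := by
    intro h
    rw [h, sub_self] at hnc
    exact habQ hnc.symm
  obtain ⟨hdeg, hlc⟩ := key (m + n) (by omega) p q hpm hqm hpd hqd hne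
  constructor
  · rw [hrw, degree_C_mul hc0, hdeg]
  · rw [hrw]
    have : (Polynomial.C c * (p - q)).leadingCoeff = c * (p - q).leadingCoeff := by
      rw [leadingCoeff_mul, leadingCoeff_C]
    rw [this, hlc, hnc, hc]
    have h1 : (m.factorial : ℚ) ≠ 0 := Nat.cast_ne_zero.mpr m.factorial_ne_zero
    have h2 : (n.factorial : ℚ) ≠ 0 := Nat.cast_ne_zero.mpr n.factorial_ne_zero
    field_simp
end
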